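/- arXiv:2001.00625 — 2 statements merged into one kernel-verified Lean document; each statement's English description precedes it below -/
import Mathlib

section
/- Let n ≥ 2 and let Q be the set of pairs (μ_{i,j}, μ_{−j,−i}) for i < j in [±n]. If X and Y are nonempty subsets of [±n] such that μ_{−X} ⊔ μ_X = μ_{−Y} ⊔ μ_Y, then the pair (μ_X, μ_Y) lies in the congruence on the partition monoid of [±n] generated by Q. -/
/- Proof idea: `μ_X` is the join of the atoms `μ_{a,b}` with `a, b ∈ X`, and `Q` identifies
each atom `μ_{a,b}` with `μ_{-a,-b}`, so `μ_X ≡ μ_{-X}`. Multiplying by `μ_X` and using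
idempotency gives `μ_X ≡ μ_{-X} ⊔ μ_X = μ_{-Y} ⊔ μ_Y ≡ μ_Y`. -/

instance setoidCommMonoid (α : Type*) : CommMonoid (Setoid α) where
  mul := (· ⊔ ·)
  one := ⊥
  mul_assoc := sup_assoc
  one_mul := bot_sup_eq
  mul_one := sup_bot_eq
  mul_comm := sup_comm

def muSet {α : Type*} (X : Set α) : Setoid α :=
  Relation.EqvGen.setoid (fun x y => x ∈ X ∧ y ∈ X)

def mu {α : Type*} (i j : α) : Setoid α := muSet {i, j}

/-- `[±n]`: nonzero integers of absolute value at most `n`, with the order from `ℤ`. -/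
abbrev PM (n : ℕ) := {k : ℤ // k ≠ 0 ∧ |k| ≤ (n : ℤ)}

namespace PM

/-- The negation involution `k ↦ -k` on `[±n]`. -/
def neg {n : ℕ} (x : PM n) : PM n :=
  ⟨-x.1, by obtain ⟨h1, h2⟩ := x.2; exact ⟨neg_ne_zero.mpr h1, by rwa [abs_neg]⟩⟩

@[simp] theorem neg_neg {n : ℕ} (x : PM n) : x.neg.neg = x := Subtype.ext (by simp [neg])

theorem neg_lt_neg {n : ℕ} {x y : PM n} (h : x < y) : y.neg < x.neg := by
  have h' : x.1 < y.1 := Subtype.coe_lt_coe.mpr h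
  rw [← Subtype.coe_lt_coe]
  show -y.1 < -x.1
  omega

theorem neg_lt_pos {n : ℕ} {x y : PM n} (hx : 0 < x.1) (hy : 0 < y.1) : x.neg < y := by
  rw [← Subtype.coe_lt_coe]
  show -x.1 < y.1
  omega

theorem pos_ne_neg {n : ℕ} {x y : PM n} (hx : 0 < x.1) (hy : 0 < y.1) : y ≠ x.neg := by
  intro h
  have : y.1 = -x.1 := congrArg Subtype.val h
  omega

theorem neg_lt_self {n : ℕ} {x : PM n} (hx : 0 < x.1) : x.neg < x := neg_lt_pos hx hx

/-- The absolute value map `x ↦ |x|` from `[±n]` to its positive part. -/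
def abs {n : ℕ} (x : PM n) : PM n :=
  ⟨|x.1|, by obtain ⟨h1, h2⟩ := x.2; exact ⟨abs_ne_zero.mpr h1, by rwa [abs_abs]⟩⟩

end PM

/-- Image of a subset of `[±n]` under negation. -/
def negSet {n : ℕ} (K : Set (PM n)) : Set (PM n) := PM.neg '' K

/-- The partition `I⁻` transported along negation: `x ∼ y` in `negPart I` iff `-x ∼ -y` in `I`. -/
def negPart {n : ℕ} (I : Setoid (PM n)) : Setoid (PM n) := Setoid.comap PM.neg I

/-- A set partition `I` of `[±n]` is *signed* if for every block `K` of `I` the set `-K` is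
also a block; equivalently, `x ∼ y ↔ -x ∼ -y` for all `x, y`. -/
def IsSigned {n : ℕ} (I : Setoid (PM n)) : Prop :=
  ∀ x y : PM n, I x y ↔ I (PM.neg x) (PM.neg y)

/-- A *zero block* of a partition `I` is a block `K` with `-K = K`. -/
def IsZeroBlock {n : ℕ} (I : Setoid (PM n)) (K : Set (PM n)) : Prop :=
  K ∈ I.classes ∧ negSet K = K

/-- A `Bₙ`-partition: a signed partition of `[±n]` with at most one zero block. -/
def IsBPart {n : ℕ} (I : Setoid (PM n)) : Prop :=
  IsSigned I ∧ Set.Subsingleton {K | IsZeroBlock I K}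

/-- A *restricted* signed partition: all its zero blocks have more than two elements. -/
def IsRestricted {n : ℕ} (I : Setoid (PM n)) : Prop :=
  IsSigned I ∧ ∀ K : Set (PM n), IsZeroBlock I K → 2 < K.ncard

/-- A `Dₙ`-partition: a `Bₙ`-partition whose zero block (if present) has more than two
elements. -/
def IsDPart {n : ℕ} (I : Setoid (PM n)) : Prop :=
  IsBPart I ∧ ∀ K : Set (PM n), IsZeroBlock I K → 2 < K.ncard

/-- For `i < j` in `[±n]`, the signed partition `ε_{i,j} = μ_{-j,-i} ⊔ μ_{i,j}`. -/
def eps {n : ℕ} (i j : PM n) : Setoid (PM n) := mu (PM.neg j) (PM.neg i) ⊔ mu i j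

/-- The set `Q` of pairs `(μ_{i,j}, μ_{-j,-i})` for `i < j` in `[±n]`, viewed as a binary
relation on the partition monoid of `[±n]`. -/
def QRel (n : ℕ) : Setoid (PM n) → Setoid (PM n) → Prop := fun a b =>
  ∃ i j : PM n, i < j ∧ a = mu i j ∧ b = mu (PM.neg j) (PM.neg i)

instance PM.instFinite (n : ℕ) : Finite (PM n) :=
  Set.finite_coe_iff.mpr <| (Set.finite_Icc (-(n : ℤ)) n).subset fun _ hk => abs_le.mp hk.2

section muSet

variable {α : Type*}

theorem muSet_rel_of_mem {X : Set α} {x y : α} (hx : x ∈ X) (hy : y ∈ X) : muSet X x y :=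
  Relation.EqvGen.rel x y ⟨hx, hy⟩

theorem muSet_mono {X Y : Set α} (h : X ⊆ Y) : muSet X ≤ muSet Y :=
  Setoid.eqvGen_le fun _ _ hr => muSet_rel_of_mem (h hr.1) (h hr.2)

theorem muSet_singleton (a : α) : muSet {a} = (⊥ : Setoid α) :=
  le_bot_iff.mp <| Setoid.eqvGen_le fun x y ⟨hx, hy⟩ => by
    rw [Set.mem_singleton_iff.mp hx, Set.mem_singleton_iff.mp hy]

theorem mu_self (a : α) : mu a a = (⊥ : Setoid α) := by
  rw [mu, Set.pair_eq_singleton, muSet_singleton]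

theorem mu_comm (a b : α) : mu a b = mu b a := by
  rw [mu, Set.pair_comm, mu]

theorem muSet_insert {X : Set α} (a : α) {b : α} (hb : b ∈ X) :
    muSet (insert a X) = mu a b ⊔ muSet X := by
  set J := mu a b ⊔ muSet X
  refine le_antisymm (Setoid.eqvGen_le fun x y ⟨hx, hy⟩ => ?_) (sup_le ?_ (muSet_mono ?_))
  · have rel_a : ∀ z ∈ insert a X, J a z := by
      rintro z (rfl | hz)
      · exact J.refl' z
      · have hab : mu a b a b :=
          muSet_rel_of_mem (Set.mem_insert a {b}) (Set.mem_insert_of_mem a rfl)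
        exact J.trans' (le_sup_left (b := muSet X) hab)
          (le_sup_right (a := mu a b) (muSet_rel_of_mem hb hz))
    exact J.trans' (J.symm' (rel_a x hx)) (rel_a y hy)
  · exact muSet_mono (Set.pair_subset (Set.mem_insert a X) (Set.mem_insert_of_mem a hb))
  · exact Set.subset_insert a X

theorem Con.muSet_image {c : Con (Setoid α)} {f : α → α}
    (hc : ∀ a b, c (mu a b) (mu (f a) (f b))) {X : Set α} (hX : X.Finite) :
    c (muSet X) (muSet (f '' X)) := by
  induction X, hX using Set.Finite.induction_on with
  | empty => rw [Set.image_empty]; exact c.refl _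
  | @insert a S _ _ ih =>
    rcases S.eq_empty_or_nonempty with rfl | ⟨b, hb⟩
    · rw [insert_empty_eq, Set.image_singleton, muSet_singleton, muSet_singleton]
      exact c.refl _
    · rw [muSet_insert a hb, Set.image_insert_eq, muSet_insert (f a) (Set.mem_image_of_mem f hb)]
      exact c.mul (hc a b) ih

end muSet

theorem conGen_QRel_mu_neg (n : ℕ) (i j : PM n) : conGen (QRel n) (mu i j) (mu i.neg j.neg) := by
  rcases lt_trichotomy i j with hij | rfl | hij
  · rw [mu_comm i.neg]
    exact ConGen.Rel.of _ _ ⟨i, j, hij, rfl, rfl⟩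
  · rw [mu_self, mu_self]
    exact (conGen _).refl _
  · rw [mu_comm i]
    exact ConGen.Rel.of _ _ ⟨j, i, hij, rfl, rfl⟩

theorem conGen_QRel_muSet_eps (n : ℕ) (X : Set (PM n)) :
    conGen (QRel n) (muSet X) (muSet (negSet X) ⊔ muSet X) := by
  have hneg := Con.muSet_image (conGen_QRel_mu_neg n) X.toFinite
  have hmul := (conGen (QRel n)).mul hneg ((conGen (QRel n)).refl (muSet X))
  rwa [show muSet X * muSet X = muSet X from sup_idem _] at hmul

theorem mu_conGen_Q_of_eps_eq_general (n : ℕ) (X Y : Set (PM n))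
    (h : muSet (negSet X) ⊔ muSet X = muSet (negSet Y) ⊔ muSet Y) :
    conGen (QRel n) (muSet X) (muSet Y) := by
  have hX := conGen_QRel_muSet_eps n X
  rw [h] at hX
  exact hX.trans (conGen_QRel_muSet_eps n Y).symm

/-- If `X, Y` are nonempty subsets of `[±n]` with
`μ_{-X} ⊔ μ_X = μ_{-Y} ⊔ μ_Y`, then `(μ_X, μ_Y)` lies in the congruence generated
by `Q`. -/
theorem mu_conGen_Q_of_eps_eq (n : ℕ) (hn : 2 ≤ n) (X Y : Set (PM n))
    (hX : X.Nonempty) (hY : Y.Nonempty)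
    (h : muSet (negSet X) ⊔ muSet X = muSet (negSet Y) ⊔ muSet Y) :
    conGen (QRel n) (muSet X) (muSet Y) :=
  mu_conGen_Q_of_eps_eq_general n X Y h
end

section
/- Let n ≥ 2. For every signed partition L of [±n], the set {K ∈ P_n^B : L ≤ K} of B_n-partitions coarser than L has a least element (in the refinement order on partitions). Consequently, for all I, J ∈ P_n^B the set {K ∈ P_n^B : I ≤ K and J ≤ K} has a least element; this least element defines the product I ·_B J on P_n^B. -/
/-!
The elements `x` with `x ∼ -x` in a signed partition `L` are exactly the union of its zero
blocks, and this union is closed under `L`. Merging it into a single block yields a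
`Bₙ`-partition above `L`. It is the least one: in a `Bₙ`-partition `K ≥ L` every such `x`
lies in a zero block of `K`, and `K` has only one. The product `I ·_B J` is the case
`L = I ⊔ J`.
-/

namespace Setoid

variable {α : Type*}

def glue (r : Setoid α) (Z : Set α) (hZ : ∀ ⦃x y⦄, r x y → y ∈ Z → x ∈ Z) : Setoid α where
  r x y := r x y ∨ (x ∈ Z ∧ y ∈ Z)
  iseqv :=
    { refl := fun x => Or.inl (r.refl x)
      symm := fun
        | Or.inl h => Or.inl (r.symm h)
        | Or.inr ⟨hx, hy⟩ => Or.inr ⟨hy, hx⟩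
      trans := fun
        | Or.inl hxy, Or.inl hyz => Or.inl (r.trans hxy hyz)
        | Or.inl hxy, Or.inr ⟨hy, hz⟩ => Or.inr ⟨hZ hxy hy, hz⟩
        | Or.inr ⟨hx, hy⟩, Or.inl hyz => Or.inr ⟨hx, hZ (r.symm hyz) hy⟩
        | Or.inr ⟨hx, _⟩, Or.inr ⟨_, hz⟩ => Or.inr ⟨hx, hz⟩ }

variable {r s : Setoid α} {Z : Set α} {hZ : ∀ ⦃x y⦄, r x y → y ∈ Z → x ∈ Z}

theorem glue_rel {x y : α} : r.glue Z hZ x y ↔ r x y ∨ (x ∈ Z ∧ y ∈ Z) := Iff.rfl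

theorem le_glue : r ≤ r.glue Z hZ := fun _ _ => Or.inl

theorem glue_le (hrs : r ≤ s) (hZs : ∀ x ∈ Z, ∀ y ∈ Z, s x y) : r.glue Z hZ ≤ s := fun
  | _, _, Or.inl h => hrs h
  | x, y, Or.inr ⟨hx, hy⟩ => hZs x hx y hy

end Setoid

variable {n : ℕ} {L K : Setoid (PM n)}

theorem isSigned_iff_le_comap_neg : IsSigned L ↔ L ≤ L.comap PM.neg := by
  refine ⟨fun hL x y => (hL x y).mp, fun hL x y => ⟨@hL x y, fun h => ?_⟩⟩
  simpa only [Setoid.comap_rel, PM.neg_neg] using hL h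

theorem IsSigned.sup {I J : Setoid (PM n)} (hI : IsSigned I) (hJ : IsSigned J) :
    IsSigned (I ⊔ J) :=
  isSigned_iff_le_comap_neg.mpr <| sup_le
    (fun x y h => le_sup_left (a := I) (b := J) ((hI x y).mp h))
    (fun x y h => le_sup_right (a := I) (b := J) ((hJ x y).mp h))

theorem IsSigned.rel_neg_of_rel (hL : IsSigned L) {x y : PM n} (h : L x y)
    (hy : L y y.neg) : L x x.neg :=
  L.trans h (L.trans hy (L.symm ((hL x y).mp h)))

theorem IsSigned.isZeroBlock_iff (hK : IsSigned K) {C : Set (PM n)} :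
    IsZeroBlock K C ↔ ∃ x, K x x.neg ∧ C = {z | K z x} := by
  constructor
  · rintro ⟨⟨x, rfl⟩, hC⟩
    have hx : x.neg ∈ negSet {z | K z x} := ⟨x, K.refl x, rfl⟩
    rw [hC] at hx
    exact ⟨x, K.symm hx, rfl⟩
  · rintro ⟨x, hx, rfl⟩
    refine ⟨K.mem_classes x, Set.ext fun w => ⟨?_, fun hw => ⟨w.neg, ?_, PM.neg_neg w⟩⟩⟩
    · rintro ⟨z, hz, rfl⟩
      exact K.trans ((hK z x).mp hz) (K.symm hx)
    · exact K.trans ((hK w x).mp hw) (K.symm hx)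

theorem IsBPart.rel_of_rel_neg (hK : IsBPart K) {x y : PM n} (hx : K x x.neg)
    (hy : K y y.neg) : K x y := by
  have hxy : {z | K z x} = {z | K z y} :=
    hK.2 (hK.1.isZeroBlock_iff.mpr ⟨x, hx, rfl⟩) (hK.1.isZeroBlock_iff.mpr ⟨y, hy, rfl⟩)
  exact (Set.ext_iff.mp hxy x).mp (K.refl x)

def glueZero (L : Setoid (PM n)) (hL : IsSigned L) : Setoid (PM n) :=
  L.glue {x | L x x.neg} fun _ _ h hy => hL.rel_neg_of_rel h hy

theorem glueZero_rel {hL : IsSigned L} {x y : PM n} :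
    glueZero L hL x y ↔ L x y ∨ (L x x.neg ∧ L y y.neg) := Setoid.glue_rel

theorem isSigned_glueZero (hL : IsSigned L) : IsSigned (glueZero L hL) := by
  intro x y
  rw [glueZero_rel, glueZero_rel, hL x y, hL x x.neg, hL y y.neg, PM.neg_neg, PM.neg_neg]

theorem isZeroBlock_glueZero (hL : IsSigned L) {C : Set (PM n)}
    (hC : IsZeroBlock (glueZero L hL) C) : C = {x | L x x.neg} := by
  obtain ⟨a, ha | ⟨ha, -⟩, rfl⟩ := (isSigned_glueZero hL).isZeroBlock_iff.mp hC <;>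
  · ext z
    rw [Set.mem_ofPred_eq, Set.mem_ofPred_eq, glueZero_rel]
    exact ⟨fun h => h.elim (hL.rel_neg_of_rel · ha) And.left, fun hz => Or.inr ⟨hz, ha⟩⟩

theorem isBPart_glueZero (hL : IsSigned L) : IsBPart (glueZero L hL) :=
  ⟨isSigned_glueZero hL, fun _ hC _ hC' =>
    (isZeroBlock_glueZero hL hC).trans (isZeroBlock_glueZero hL hC').symm⟩

theorem isLeast_glueZero (hL : IsSigned L) :
    IsLeast {K | IsBPart K ∧ L ≤ K} (glueZero L hL) :=
  ⟨⟨isBPart_glueZero hL, Setoid.le_glue⟩, fun _ ⟨hK, hLK⟩ =>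
    Setoid.glue_le hLK fun _ hx _ hy => hK.rel_of_rel_neg (hLK hx) (hLK hy)⟩

theorem exists_least_BPart_coarsening_general (n : ℕ) :
    (∀ L : Setoid (PM n), IsSigned L →
        ∃ K₀ : Setoid (PM n), IsLeast {K | IsBPart K ∧ L ≤ K} K₀) ∧
      ∀ I J : Setoid (PM n), IsBPart I → IsBPart J →
        ∃ K₀ : Setoid (PM n), IsLeast {K | IsBPart K ∧ I ≤ K ∧ J ≤ K} K₀ := by
  refine ⟨fun L hL => ⟨_, isLeast_glueZero hL⟩, fun I J hI hJ => ?_⟩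
  have hcommon : {K | IsBPart K ∧ I ≤ K ∧ J ≤ K} = {K | IsBPart K ∧ I ⊔ J ≤ K} := by
    simp only [sup_le_iff]
  exact hcommon ▸ ⟨_, isLeast_glueZero (hI.1.sup hJ.1)⟩

/-- For every signed partition `L` of `[±n]`, the set of
`Bₙ`-partitions coarser than `L` has a least element (in the refinement order).
Consequently, for all `Bₙ`-partitions `I, J`, the set of common `Bₙ`-coarsenings of
`I` and `J` has a least element; this least element defines the product `I ·_B J`. -/
theorem exists_least_BPart_coarsening (n : ℕ) (hn : 2 ≤ n) :
    (∀ L : Setoid (PM n), IsSigned L →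
        ∃ K₀ : Setoid (PM n), IsLeast {K | IsBPart K ∧ L ≤ K} K₀) ∧
      ∀ I J : Setoid (PM n), IsBPart I → IsBPart J →
        ∃ K₀ : Setoid (PM n), IsLeast {K | IsBPart K ∧ I ≤ K ∧ J ≤ K} K₀ :=
  exists_least_BPart_coarsening_general n
end
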